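/- Let G be a connected loopless graph, G' a refinement of G, and φ: G' → T a finite harmonic morphism to a tree T. If the measured tree (T, φ_*μ_G) is c-thick for some c > 0, then deg φ ≥ (c/2) · λ_G · |G|. -/

import Mathlib

/-!  Finite multigraphs, harmonic morphisms, refinements and stable gonality,
     following Cornelissen–Kato–Kool, "A combinatorial Li–Yau inequality and
     rational points on curves".  -/

attribute [local instance] Classical.propDecidable

noncomputable section

/-- A finite multigraph: a finite vertex type, a finite edge type, and for each
edge its two (possibly equal) endpoints. -/
structure MGraph where
  V : Type
  E : Type
  [vFin : Fintype V]
  [eFin : Fintype E]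
  fst : E → V
  snd : E → V

attribute [instance] MGraph.vFin MGraph.eFin

namespace MGraph

variable (G : MGraph)

/-- The edge `e` is incident to the vertex `v`. -/
def Inc (e : G.E) (v : G.V) : Prop := G.fst e = v ∨ G.snd e = v

/-- The edge `e` joins the vertices `x` and `y` (unordered). -/
def Joins (e : G.E) (x y : G.V) : Prop :=
  (G.fst e = x ∧ G.snd e = y) ∨ (G.fst e = y ∧ G.snd e = x)

/-- Two vertices are adjacent if some edge joins them. -/
def Adj (x y : G.V) : Prop := ∃ e, G.Joins e x y

/-- A multigraph is connected if it is nonempty and any two vertices are joined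
by a walk. -/
def Connected : Prop := Nonempty G.V ∧ ∀ x y : G.V, Relation.ReflTransGen G.Adj x y

/-- No loops. -/
def Loopless : Prop := ∀ e : G.E, G.fst e ≠ G.snd e

/-- A simple graph: no loops and no multiple edges. -/
def Simple : Prop :=
  G.Loopless ∧ ∀ e e' : G.E, G.Joins e' (G.fst e) (G.snd e) → e = e'

/-- A tree is a connected graph of genus `|E| - |V| + 1 = 0`. -/
def IsTree : Prop := G.Connected ∧ Fintype.card G.V = Fintype.card G.E + 1

/-- The degree of a vertex (loops count twice). -/
def degree (v : G.V) : ℕ :=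
  (Finset.univ.filter fun e => G.fst e = v).card +
    (Finset.univ.filter fun e => G.snd e = v).card

/-- The maximal vertex degree `Δ_G`. -/
def maxDegree : ℕ := Finset.univ.sup G.degree

/-- The volume `vol(G) = Σ_v deg v = 2 |E|`. -/
def vol : ℕ := ∑ v, G.degree v

/-- The number of edges joining `x` and `y`. -/
def numEdges (x y : G.V) : ℕ := (Finset.univ.filter fun e => G.Joins e x y).card

/-- The Laplacian matrix `L_G = D_G - A_G`. -/
def lapMatrix : Matrix G.V G.V ℝ := fun x y =>
  (if x = y then (G.degree x : ℝ) else 0) - (G.numEdges x y : ℝ)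

/-- `lam` is the smallest nonzero eigenvalue `λ_G` of the Laplacian of `G`. -/
def IsFirstLapEigenvalue (lam : ℝ) : Prop :=
  IsLeast {μ : ℝ | μ ≠ 0 ∧ ∃ f : G.V → ℝ, f ≠ 0 ∧ G.lapMatrix.mulVec f = μ • f} lam

/-- The normalized Laplacian `D^{-1/2} L D^{-1/2}`. -/
def normLapMatrix : Matrix G.V G.V ℝ := fun x y =>
  G.lapMatrix x y / (Real.sqrt (G.degree x) * Real.sqrt (G.degree y))

/-- `lam` is the smallest nonzero eigenvalue of the normalized Laplacian of `G`. -/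
def IsFirstNormLapEigenvalue (lam : ℝ) : Prop :=
  IsLeast {μ : ℝ | μ ≠ 0 ∧ ∃ f : G.V → ℝ, f ≠ 0 ∧ G.normLapMatrix.mulVec f = μ • f} lam

/-- Reachability by walks staying inside the vertex set `S`. -/
def ReachIn (S : Set G.V) (x y : G.V) : Prop :=
  Relation.ReflTransGen (fun a b => a ∈ S ∧ b ∈ S ∧ G.Adj a b) x y

/-- Reachability by walks not using the edge `e₀`. -/
def ReachAvoidEdge (e₀ : G.E) (x y : G.V) : Prop :=
  Relation.ReflTransGen (fun a b => ∃ e, e ≠ e₀ ∧ G.Joins e a b) x y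

/-- The connected component of `G - e` containing the vertex `v`. -/
def edgeSide (e : G.E) (v : G.V) : Set G.V := {y | G.ReachAvoidEdge e v y}

/-- The connected component of `G - x` containing the vertex `y`. -/
def vertexSide (x y : G.V) : Set G.V := {z | G.ReachIn {v | v ≠ x} y z}

end MGraph

/-- The mass `ν(S)` of a set of vertices. -/
def mass {V : Type} [Fintype V] (ν : V → ℝ) (S : Set V) : ℝ :=
  ∑ v ∈ Finset.univ.filter (fun v => v ∈ S), ν v

/-- A probability measure on a finite vertex set. -/
def IsProbMeasure {V : Type} [Fintype V] (ν : V → ℝ) : Prop :=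
  (∀ v, 0 ≤ ν v) ∧ ∑ v, ν v = 1

namespace MGraph

/-- The size of an edge `e` of a measured tree `(T, ν)`:
`min(ν(T₁(e)), ν(T₂(e)))`. -/
def edgeSize (G : MGraph) (ν : G.V → ℝ) (e : G.E) : ℝ :=
  min (mass ν (G.edgeSide e (G.fst e))) (mass ν (G.edgeSide e (G.snd e)))

/-- `(T, ν)` is `c`-thick: for every vertex `x`, `T - x` has a connected
component of measure at least `c`. -/
def Thick (G : MGraph) (ν : G.V → ℝ) (c : ℝ) : Prop :=
  ∀ x : G.V, ∃ y : G.V, y ≠ x ∧ c ≤ mass ν (G.vertexSide x y)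

/-- Subdivision of the edge `e₀`: a new vertex in the middle of `e₀`,
and `e₀` replaced by two new edges. -/
def subdivide (G : MGraph) (e₀ : G.E) : MGraph where
  V := G.V ⊕ Unit
  E := {e : G.E // e ≠ e₀} ⊕ Bool
  vFin := inferInstance
  eFin := inferInstance
  fst := fun e => match e with
    | Sum.inl e1 => Sum.inl (G.fst e1.1)
    | Sum.inr false => Sum.inl (G.fst e₀)
    | Sum.inr true => Sum.inr ()
  snd := fun e => match e with
    | Sum.inl e1 => Sum.inl (G.snd e1.1)
    | Sum.inr false => Sum.inr ()
    | Sum.inr true => Sum.inl (G.snd e₀)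

/-- Addition of a leaf at the vertex `v₀`: one new vertex, joined to `v₀` by
one new edge. -/
def addLeaf (G : MGraph) (v₀ : G.V) : MGraph where
  V := G.V ⊕ Unit
  E := G.E ⊕ Unit
  vFin := inferInstance
  eFin := inferInstance
  fst := Sum.elim (fun e => Sum.inl (G.fst e)) (fun _ => Sum.inl v₀)
  snd := Sum.elim (fun e => Sum.inl (G.snd e)) (fun _ => Sum.inr ())

/-- An isomorphism of multigraphs. -/
structure Iso (G H : MGraph) where
  eV : G.V ≃ H.V
  eE : G.E ≃ H.E
  ends : ∀ e, H.Joins (eE e) (eV (G.fst e)) (eV (G.snd e))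

/-- `Refines G G' ι p` means: `G'` is a refinement of `G` (obtained from `G`
by finitely many subdivisions of edges and additions of leaves, up to
isomorphism).  The map `ι` identifies the vertices of `G` inside `G'` and the
"provenance" map `p` records, for every edge of `G'`, the edge of `G` it lies
over (`none` for edges of added leaf-trees). -/
inductive Refines : ∀ (G G' : MGraph), (G.V → G'.V) → (G'.E → Option G.E) → Prop
  | refl (G : MGraph) : Refines G G id (fun e => some e)
  | subdiv {G G' : MGraph} {ι : G.V → G'.V} {p : G'.E → Option G.E}
      (h : Refines G G' ι p) (e₀ : G'.E) :
      Refines G (subdivide G' e₀) (fun v => Sum.inl (ι v))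
        (fun e => Sum.elim (fun e1 : {e : G'.E // e ≠ e₀} => p e1.1) (fun _ : Bool => p e₀) e)
  | leaf {G G' : MGraph} {ι : G.V → G'.V} {p : G'.E → Option G.E}
      (h : Refines G G' ι p) (v₀ : G'.V) :
      Refines G (addLeaf G' v₀) (fun v => Sum.inl (ι v))
        (fun e => Sum.elim (fun e1 : G'.E => p e1) (fun _ : Unit => none) e)
  | iso {G G' : MGraph} {ι : G.V → G'.V} {p : G'.E → Option G.E}
      (h : Refines G G' ι p) {G'' : MGraph} (φ : Iso G' G'') :
      Refines G G'' (fun v => φ.eV (ι v)) (fun e => p (φ.eE.symm e))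

/-- `Subdivides G G' ι`: `G'` is obtained from `G` by subdividing edges only
(no leaves added), up to isomorphism. -/
inductive Subdivides : ∀ (G G' : MGraph), (G.V → G'.V) → Prop
  | refl (G : MGraph) : Subdivides G G id
  | subdiv {G G' : MGraph} {ι : G.V → G'.V}
      (h : Subdivides G G' ι) (e₀ : G'.E) :
      Subdivides G (subdivide G' e₀) (fun v => Sum.inl (ι v))
  | iso {G G' : MGraph} {ι : G.V → G'.V}
      (h : Subdivides G G' ι) {G'' : MGraph} (φ : Iso G' G'') :
      Subdivides G G'' (fun v => φ.eV (ι v))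

/-- A finite harmonic (indexed) morphism of multigraphs: vertices map to
vertices, edges to edges (compatibly with endpoints), each edge `e` carries a
positive index `r e`, and around each vertex `v` the sums
`Σ_{e ∋ v, fE e = e'} r e` have a common value `m v > 0` for all edges `e'`
incident to the image of `v`. -/
structure FinHarm (G T : MGraph) where
  fV : G.V → T.V
  fE : G.E → T.E
  r : G.E → ℕ
  r_pos : ∀ e, 0 < r e
  ends : ∀ e, T.Joins (fE e) (fV (G.fst e)) (fV (G.snd e))
  m : G.V → ℕ
  m_pos : ∀ v, 0 < m v
  harm : ∀ v : G.V, ∀ e' : T.E, T.Inc e' (fV v) →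
    m v = ∑ e ∈ Finset.univ.filter (fun e => G.Inc e v ∧ fE e = e'), r e

/-- `φ` has degree `d`: over every vertex the `m`'s sum to `d` and over every
edge the indices sum to `d`. -/
def FinHarm.IsDegree {G T : MGraph} (φ : FinHarm G T) (d : ℕ) : Prop :=
  (∀ v' : T.V, ∑ v ∈ Finset.univ.filter (fun v => φ.fV v = v'), φ.m v = d) ∧
  (∀ e' : T.E, ∑ e ∈ Finset.univ.filter (fun e => φ.fE e = e'), φ.r e = d)

/-- The set of degrees of finite harmonic morphisms from refinements of `G` to
trees; the stable gonality `sgon(G)` is the least element of this set. -/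
def sgonSet (G : MGraph) : Set ℕ :=
  {d | ∃ (G' T : MGraph) (ι : G.V → G'.V) (p : G'.E → Option G.E),
        Refines G G' ι p ∧ G'.Loopless ∧ T.IsTree ∧
        ∃ φ : FinHarm G' T, φ.IsDegree d}

/-- `|φ⁻¹(S) ∩ V(G)|` for `S ⊆ V(T)`, `G'` a refinement of `G` via `ι`,
and `φ : G' → T`. -/
def pushCount {G G' T : MGraph} (ι : G.V → G'.V) (φ : FinHarm G' T) (S : Set T.V) : ℕ :=
  (Finset.univ.filter (fun v : G.V => φ.fV (ι v) ∈ S)).card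

/-- The pushforward measure `φ_* μ_G (S) = |φ⁻¹(S) ∩ V(G)| / |G|`. -/
def pushMeasure {G G' T : MGraph} (ι : G.V → G'.V) (φ : FinHarm G' T) (S : Set T.V) : ℝ :=
  (pushCount ι φ S : ℝ) / (Fintype.card G.V : ℝ)

/-- The size of an edge `e` of `T` with respect to the pushforward measure
`φ_* μ_G`. -/
def pushEdgeSize {G G' T : MGraph} (ι : G.V → G'.V) (φ : FinHarm G' T) (e : T.E) : ℝ :=
  min (pushMeasure ι φ (T.edgeSide e (T.fst e))) (pushMeasure ι φ (T.edgeSide e (T.snd e)))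

/-- The measured tree `(T, φ_* μ_G)` is `c`-thick. -/
def PushThick {G G' T : MGraph} (ι : G.V → G'.V) (φ : FinHarm G' T) (c : ℝ) : Prop :=
  ∀ x : T.V, ∃ y : T.V, y ≠ x ∧ c ≤ pushMeasure ι φ (T.vertexSide x y)

end MGraph

open MGraph
namespace MGraph

variable {G : MGraph}

lemma Joins.symm {e : G.E} {x y : G.V} (h : G.Joins e x y) : G.Joins e y x := by
  rcases h with ⟨h1, h2⟩ | ⟨h1, h2⟩
  · exact Or.inr ⟨h1, h2⟩
  · exact Or.inl ⟨h1, h2⟩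

lemma joins_ends (G : MGraph) (e : G.E) : G.Joins e (G.fst e) (G.snd e) := Or.inl ⟨rfl, rfl⟩

lemma Adj.symm' {x y : G.V} (h : G.Adj x y) : G.Adj y x := by
  obtain ⟨e, hj⟩ := h; exact ⟨e, hj.symm⟩

lemma Joins.transfer {e : G.E} {x y : G.V} (h : G.Joins e x y) {H : MGraph} {e' : H.E}
    {f : G.V → H.V} (h' : H.Joins e' (f (G.fst e)) (f (G.snd e))) : H.Joins e' (f x) (f y) := by
  rcases h with ⟨h1, h2⟩ | ⟨h1, h2⟩
  · rw [h1, h2] at h'; exact h'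
  · rw [h1, h2] at h'; exact h'.symm

/-! ### Counting connected components -/

/-- One-step relation using only edges in `F`. -/
def erel (G : MGraph) (F : Finset G.E) : G.V → G.V → Prop := fun a b => ∃ e ∈ F, G.Joins e a b

/-- Number of connected components of the spanning subgraph with edge set `F`. -/
noncomputable def ncl (G : MGraph) (F : Finset G.E) : ℕ :=
  Fintype.card (Quotient (Relation.EqvGen.setoid (G.erel F)))

lemma ncl_empty (G : MGraph) : G.ncl ∅ = Fintype.card G.V := by
  refine (Fintype.card_of_bijective
    (f := (Quotient.mk (Relation.EqvGen.setoid (G.erel ∅)) : G.V → _)) ⟨?_, ?_⟩).symm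
  · intro x y h
    have h' : Relation.EqvGen (G.erel ∅) x y := Quotient.exact h
    clear h
    induction h' with
    | rel x y h => obtain ⟨e, he, _⟩ := h; exact absurd he (Finset.notMem_empty e)
    | refl x => rfl
    | symm x y _ ih => exact ih.symm
    | trans x y z _ _ ih1 ih2 => exact ih1.trans ih2
  · exact fun q => Quotient.exists_rep q

lemma eqvGen_insert {G : MGraph} {F : Finset G.E} {e₀ : G.E} {a b : G.V}
    (h : Relation.EqvGen (G.erel (insert e₀ F)) a b) :
    Relation.EqvGen (G.erel F) a b ∨
      (Relation.EqvGen (G.erel F) a (G.fst e₀) ∧ Relation.EqvGen (G.erel F) (G.snd e₀) b) ∨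
      (Relation.EqvGen (G.erel F) a (G.snd e₀) ∧ Relation.EqvGen (G.erel F) (G.fst e₀) b) := by
  have Rs : ∀ {u v : G.V}, Relation.EqvGen (G.erel F) u v → Relation.EqvGen (G.erel F) v u :=
    fun h => Relation.EqvGen.symm _ _ h
  have Rt : ∀ {u v w : G.V}, Relation.EqvGen (G.erel F) u v → Relation.EqvGen (G.erel F) v w →
      Relation.EqvGen (G.erel F) u w := fun h1 h2 => Relation.EqvGen.trans _ _ _ h1 h2
  induction h with
  | rel x y h =>
    obtain ⟨e, he, hj⟩ := h
    rcases Finset.mem_insert.mp he with rfl | he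
    · rcases hj with ⟨h1, h2⟩ | ⟨h1, h2⟩
      · refine Or.inr (Or.inl ⟨?_, ?_⟩)
        · rw [h1]; exact Relation.EqvGen.refl _
        · rw [h2]; exact Relation.EqvGen.refl _
      · refine Or.inr (Or.inr ⟨?_, ?_⟩)
        · rw [h2]; exact Relation.EqvGen.refl _
        · rw [h1]; exact Relation.EqvGen.refl _
    · exact Or.inl (Relation.EqvGen.rel _ _ ⟨e, he, hj⟩)
  | refl x => exact Or.inl (Relation.EqvGen.refl x)
  | symm x y _ ih =>
    rcases ih with h | ⟨h1, h2⟩ | ⟨h1, h2⟩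
    · exact Or.inl (Rs h)
    · exact Or.inr (Or.inr ⟨Rs h2, Rs h1⟩)
    · exact Or.inr (Or.inl ⟨Rs h2, Rs h1⟩)
  | trans x y z _ _ ih1 ih2 =>
    rcases ih1 with h | ⟨h1, h2⟩ | ⟨h1, h2⟩ <;> rcases ih2 with h' | ⟨h1', h2'⟩ | ⟨h1', h2'⟩
    · exact Or.inl (Rt h h')
    · exact Or.inr (Or.inl ⟨Rt h h1', h2'⟩)
    · exact Or.inr (Or.inr ⟨Rt h h1', h2'⟩)
    · exact Or.inr (Or.inl ⟨h1, Rt h2 h'⟩)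
    · exact Or.inl (Rt h1 (Rt (Rs (Rt h2 h1')) h2'))
    · exact Or.inl (Rt h1 h2')
    · exact Or.inr (Or.inr ⟨h1, Rt h2 h'⟩)
    · exact Or.inl (Rt h1 h2')
    · exact Or.inl (Rt h1 (Rt (Rs (Rt h2 h1')) h2'))

lemma ncl_le_insert (G : MGraph) (F : Finset G.E) (e₀ : G.E) :
    G.ncl F ≤ G.ncl (insert e₀ F) + 1 := by
  set s₁ := Relation.EqvGen.setoid (G.erel F)
  set s₂ := Relation.EqvGen.setoid (G.erel (insert e₀ F))
  have hmono : ∀ x y : G.V, Relation.EqvGen (G.erel F) x y →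
      Relation.EqvGen (G.erel (insert e₀ F)) x y := fun x y h =>
    Relation.EqvGen.mono (fun a b ⟨e, he, hj⟩ => ⟨e, Finset.mem_insert_of_mem he, hj⟩) _ _ h
  let π : Quotient s₁ → Quotient s₂ := Quotient.map id (fun a b h => hmono a b h)
  have hπ : ∀ x : G.V, π (Quotient.mk s₁ x) = Quotient.mk s₂ x := fun x => rfl
  set sc : Quotient s₁ := Quotient.mk s₁ (G.snd e₀)
  have hinj : Set.InjOn π ((Finset.univ.erase sc) : Finset (Quotient s₁)) := by
    intro x hx y hy hxy
    obtain ⟨x', rfl⟩ := Quotient.exists_rep x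
    obtain ⟨y', rfl⟩ := Quotient.exists_rep y
    rw [hπ, hπ] at hxy
    have h2 : Relation.EqvGen (G.erel (insert e₀ F)) x' y' := Quotient.exact hxy
    rcases eqvGen_insert h2 with h | ⟨h1, h2⟩ | ⟨h1, h2⟩
    · exact Quotient.sound h
    · exfalso
      have : (Quotient.mk s₁ y' : Quotient s₁) = sc :=
        Quotient.sound (Relation.EqvGen.symm _ _ h2)
      simp only [Finset.coe_erase, Set.mem_diff, Set.mem_singleton_iff] at hy
      exact hy.2 this
    · exfalso
      have : (Quotient.mk s₁ x' : Quotient s₁) = sc := Quotient.sound h1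
      simp only [Finset.coe_erase, Set.mem_diff, Set.mem_singleton_iff] at hx
      exact hx.2 this
  have hcard := Finset.card_le_card_of_injOn π (fun x _ => Finset.mem_univ (π x)) hinj
  rw [Finset.card_erase_of_mem (Finset.mem_univ sc), Finset.card_univ, Finset.card_univ] at hcard
  have h1 : G.ncl F - 1 ≤ G.ncl (insert e₀ F) := hcard
  omega

lemma card_le_ncl_add (G : MGraph) (F : Finset G.E) :
    Fintype.card G.V ≤ G.ncl F + F.card := by
  induction F using Finset.induction_on with
  | empty => simp [ncl_empty]
  | insert _ _ he ih =>
    rename_i e₀ F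
    calc Fintype.card G.V ≤ G.ncl F + F.card := ih
    _ ≤ (G.ncl (insert e₀ F) + 1) + F.card := by
        exact Nat.add_le_add_right (ncl_le_insert G F e₀) _
    _ = G.ncl (insert e₀ F) + (insert e₀ F).card := by
        rw [Finset.card_insert_of_notMem he]; omega

lemma ncl_eq_one_of (G : MGraph) (F : Finset G.E) (hne : Nonempty G.V)
    (h : ∀ a b : G.V, Relation.EqvGen (G.erel F) a b) : G.ncl F = 1 := by
  obtain ⟨v₀⟩ := hne
  apply Fintype.card_eq_one_iff.mpr
  refine ⟨Quotient.mk _ v₀, fun q => ?_⟩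
  obtain ⟨x, rfl⟩ := Quotient.exists_rep q
  exact Quotient.sound (h x v₀)

/-- In a tree, every edge is a bridge. -/
lemma not_reachAvoidEdge {T : MGraph} (hT : T.IsTree) (e₀ : T.E) :
    ¬ T.ReachAvoidEdge e₀ (T.fst e₀) (T.snd e₀) := by
  intro h
  have conv : ∀ {x y : T.V}, T.ReachAvoidEdge e₀ x y →
      Relation.EqvGen (T.erel (Finset.univ.erase e₀)) x y := by
    intro x y hxy
    induction hxy with
    | refl => exact Relation.EqvGen.refl _
    | tail _ hstep ih =>
      obtain ⟨e, hne, hj⟩ := hstep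
      exact Relation.EqvGen.trans _ _ _ ih (Relation.EqvGen.rel _ _
        ⟨e, Finset.mem_erase.mpr ⟨hne, Finset.mem_univ _⟩, hj⟩)
  have h1 : T.ncl (Finset.univ.erase e₀) = 1 := by
    apply ncl_eq_one_of _ _ hT.1.1
    intro a b
    have hw := hT.1.2 a b
    induction hw with
    | refl => exact Relation.EqvGen.refl _
    | tail _ hadj ih =>
      obtain ⟨e, hj⟩ := hadj
      by_cases he : e = e₀
      · subst he
        have hpq := conv h
        rcases hj with ⟨hx, hy⟩ | ⟨hx, hy⟩
        · rw [hx, hy] at hpq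
          exact Relation.EqvGen.trans _ _ _ ih hpq
        · rw [hx, hy] at hpq
          exact Relation.EqvGen.trans _ _ _ ih (Relation.EqvGen.symm _ _ hpq)
      · exact Relation.EqvGen.trans _ _ _ ih (Relation.EqvGen.rel _ _
          ⟨e, Finset.mem_erase.mpr ⟨he, Finset.mem_univ _⟩, hj⟩)
  have h2 := card_le_ncl_add T (Finset.univ.erase e₀)
  rw [h1, Finset.card_erase_of_mem (Finset.mem_univ _), Finset.card_univ] at h2
  have h3 := hT.2
  have hpos : 0 < Fintype.card T.E := Fintype.card_pos_iff.mpr ⟨e₀⟩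
  omega

end MGraph
namespace MGraph

variable {T : MGraph}

lemma reachAvoidEdge_symm {e₀ : T.E} {x y : T.V} (h : T.ReachAvoidEdge e₀ x y) :
    T.ReachAvoidEdge e₀ y x :=
  Std.Symm.symm (r := Relation.ReflTransGen (fun a b => ∃ e, e ≠ e₀ ∧ T.Joins e a b))
    (self := @Relation.ReflTransGen.stdSymm _ _ (⟨fun _ _ ⟨e, hne, hj⟩ => ⟨e, hne, hj.symm⟩⟩)) _ _ h

lemma mem_edgeSide_self (e : T.E) (v : T.V) : v ∈ T.edgeSide e v := Relation.ReflTransGen.refl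

lemma edgeSide_step {e t : T.E} {v x y : T.V} (hx : x ∈ T.edgeSide e v) (hne : t ≠ e)
    (hj : T.Joins t x y) : y ∈ T.edgeSide e v :=
  Relation.ReflTransGen.tail hx ⟨t, hne, hj⟩

lemma edgeSide_disjoint (hT : T.IsTree) {e : T.E} {x y z : T.V} (hj : T.Joins e x y)
    (hx : z ∈ T.edgeSide e x) (hy : z ∈ T.edgeSide e y) : False := by
  have hxy : T.ReachAvoidEdge e x y :=
    Relation.ReflTransGen.trans hx (reachAvoidEdge_symm hy)
  rcases hj with ⟨h1, h2⟩ | ⟨h1, h2⟩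
  · rw [← h1, ← h2] at hxy; exact not_reachAvoidEdge hT e hxy
  · rw [← h1, ← h2] at hxy; exact not_reachAvoidEdge hT e (reachAvoidEdge_symm hxy)

lemma edgeSide_cover (hC : T.Connected) {e : T.E} {x y : T.V} (hj : T.Joins e x y) (w : T.V) :
    w ∈ T.edgeSide e x ∨ w ∈ T.edgeSide e y := by
  have hw := hC.2 x w
  induction hw with
  | refl => exact Or.inl (mem_edgeSide_self e x)
  | tail _ hadj ih =>
    rename_i bb cc
    obtain ⟨t, hjt⟩ := hadj
    by_cases ht : t = e
    · rw [ht] at hjt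
      rcases hjt with ⟨h1, h2⟩ | ⟨h1, h2⟩ <;> rcases hj with ⟨g1, g2⟩ | ⟨g1, g2⟩
      · rw [← h2, g2]; exact Or.inr (mem_edgeSide_self e y)
      · rw [← h2, g2]; exact Or.inl (mem_edgeSide_self e x)
      · rw [← h1, g1]; exact Or.inl (mem_edgeSide_self e x)
      · rw [← h1, g1]; exact Or.inr (mem_edgeSide_self e y)
    · rcases ih with h | h
      · exact Or.inl (edgeSide_step h ht hjt)
      · exact Or.inr (edgeSide_step h ht hjt)

lemma reachIn_symm {S : Set T.V} {x y : T.V} (h : T.ReachIn S x y) : T.ReachIn S y x :=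
  Std.Symm.symm (r := Relation.ReflTransGen (fun a b => a ∈ S ∧ b ∈ S ∧ T.Adj a b))
    (self := @Relation.ReflTransGen.stdSymm _ _ (⟨fun _ _ ⟨ha, hb, hadj⟩ => ⟨hb, ha, hadj.symm'⟩⟩)) _ _ h

lemma mem_vertexSide_self (x y : T.V) : y ∈ T.vertexSide x y := Relation.ReflTransGen.refl

lemma vertexSide_eq_of_mem {x y z : T.V} (hz : z ∈ T.vertexSide x y) :
    T.vertexSide x z = T.vertexSide x y := by
  ext w
  constructor
  · intro hw; exact Relation.ReflTransGen.trans (hz : T.ReachIn _ y z) hw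
  · intro hw; exact Relation.ReflTransGen.trans (reachIn_symm hz) hw

lemma edgeSide_eq_vertexSide (hT : T.IsTree) {t : T.E} {a z : T.V} (hj : T.Joins t a z) :
    T.edgeSide t z = T.vertexSide a z := by
  have hdis : ∀ w, w ∈ T.edgeSide t a → w ∈ T.edgeSide t z → False :=
    fun w h1 h2 => edgeSide_disjoint hT hj h1 h2
  ext w
  constructor
  · intro hw
    induction hw with
    | refl => exact Relation.ReflTransGen.refl
    | tail hzb hb ih =>
      obtain ⟨e, hne, hjb⟩ := hb
      rename_i b cc
      refine Relation.ReflTransGen.tail ih ⟨?_, ?_, ⟨e, hjb⟩⟩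
      · intro hba
        exact hdis b (by rw [hba]; exact mem_edgeSide_self t a) hzb
      · intro hca
        exact hdis cc (by rw [hca]; exact mem_edgeSide_self t a)
          (Relation.ReflTransGen.tail hzb ⟨e, hne, hjb⟩)
  · intro hw
    induction hw with
    | refl => exact Relation.ReflTransGen.refl
    | tail hzb hb ih =>
      obtain ⟨hbne, hcne, e, hjbc⟩ := hb
      refine edgeSide_step ih ?_ hjbc
      intro he
      subst he
      rcases hjbc with ⟨h1, h2⟩ | ⟨h1, h2⟩ <;> rcases hj with ⟨g1, g2⟩ | ⟨g1, g2⟩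
      · exact hbne (h1.symm.trans g1)
      · exact hcne (h2.symm.trans g2)
      · exact hcne (h1.symm.trans g1)
      · exact hbne (h2.symm.trans g2)

lemma exists_boundary {y v : T.V} (h : Relation.ReflTransGen T.Adj y v) :
    y ≠ v → ∃ z t, z ∈ T.vertexSide v y ∧ T.Joins t z v := by
  induction h using Relation.ReflTransGen.head_induction_on with
  | refl => exact fun h => absurd rfl h
  | @head x y' h' hrest ih =>
    intro hxv
    by_cases hyv : y' = v
    · subst hyv
      obtain ⟨e, hj⟩ := h'
      exact ⟨x, e, mem_vertexSide_self _ _, hj⟩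
    · obtain ⟨z, t, hz, ht⟩ := ih hyv
      refine ⟨z, t, ?_, ht⟩
      exact Relation.ReflTransGen.trans
        (Relation.ReflTransGen.single ⟨hxv, hyv, h'⟩) hz

/-- From `c`-thickness, there is an edge of the tree both of whose sides have
measure at least `c`. -/
lemma exists_good_edge (T : MGraph) (hT : T.IsTree) (ν : Set T.V → ℝ) (c : ℝ)
    (hthick : ∀ x : T.V, ∃ y, y ≠ x ∧ c ≤ ν (T.vertexSide x y)) :
    ∃ e : T.E, c ≤ ν (T.edgeSide e (T.fst e)) ∧ c ≤ ν (T.edgeSide e (T.snd e)) := by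
  classical
  have helper : ∀ x : T.V, ∃ (t : T.E) (z : T.V), T.Joins t z x ∧ c ≤ ν (T.edgeSide t z) := by
    intro x
    obtain ⟨y, hyx, hy⟩ := hthick x
    obtain ⟨z, t, hz, hjt⟩ := exists_boundary (hT.1.2 y x) hyx
    refine ⟨t, z, hjt, ?_⟩
    rw [edgeSide_eq_vertexSide hT hjt.symm, vertexSide_eq_of_mem hz]
    exact hy
  set wt : T.E × T.V → ℕ :=
    fun tz => (Finset.univ.filter (fun w => w ∈ T.edgeSide tz.1 tz.2)).card with hwt
  set P : Finset (T.E × T.V) := Finset.univ.filter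
    (fun tz => (∃ x, T.Joins tz.1 tz.2 x) ∧ c ≤ ν (T.edgeSide tz.1 tz.2)) with hP
  have hPne : P.Nonempty := by
    obtain ⟨v₀⟩ := hT.1.1
    obtain ⟨t, z, hj, hν⟩ := helper v₀
    exact ⟨(t, z), Finset.mem_filter.mpr ⟨Finset.mem_univ _, ⟨v₀, hj⟩, hν⟩⟩
  obtain ⟨tw, htwP, hmin⟩ := Finset.exists_min_image P wt hPne
  obtain ⟨-, ⟨x₀, hjx⟩, hν⟩ := Finset.mem_filter.mp htwP
  obtain ⟨t₀, w⟩ := tw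
  simp only at hjx hν hmin ⊢
  suffices h : c ≤ ν (T.edgeSide t₀ x₀) by
    rcases hjx with ⟨h1, h2⟩ | ⟨h1, h2⟩
    · exact ⟨t₀, by rw [h1]; exact hν, by rw [h2]; exact h⟩
    · exact ⟨t₀, by rw [h1]; exact h, by rw [h2]; exact hν⟩
  by_contra hlt
  push_neg at hlt
  obtain ⟨y, hyw, hy⟩ := hthick w
  have hSa : T.edgeSide t₀ x₀ = T.vertexSide w x₀ := edgeSide_eq_vertexSide hT hjx
  by_cases hyS : y ∈ T.vertexSide w x₀
  · rw [vertexSide_eq_of_mem hyS] at hy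
    rw [hSa] at hlt
    exact absurd hy (not_le.mpr hlt)
  · have hyW : y ∈ T.edgeSide t₀ w := by
      rcases edgeSide_cover hT.1 hjx y with h | h
      · exact h
      · exact absurd (hSa ▸ h) hyS
    have hCsub : ∀ u, u ∈ T.vertexSide w y → u ∈ T.edgeSide t₀ w ∧ u ≠ w := by
      intro u hu
      induction hu with
      | refl => exact ⟨hyW, hyw⟩
      | tail hb hstep ih =>
        obtain ⟨hbw, hcw, e, hje⟩ := hstep
        obtain ⟨hbW, -⟩ := ih
        refine ⟨?_, hcw⟩
        refine edgeSide_step hbW ?_ hje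
        intro he
        subst he
        rcases hje with ⟨h1, h2⟩ | ⟨h1, h2⟩ <;> rcases hjx with ⟨g1, g2⟩ | ⟨g1, g2⟩
        · exact hbw (h1.symm.trans g1)
        · exact hcw (h2.symm.trans g2)
        · exact hcw (h1.symm.trans g1)
        · exact hbw (h2.symm.trans g2)
    obtain ⟨z, t, hz, hjt⟩ := exists_boundary (hT.1.2 y w) hyw
    have hSide : T.edgeSide t z = T.vertexSide w y := by
      rw [edgeSide_eq_vertexSide hT hjt.symm]
      exact vertexSide_eq_of_mem hz
    have hPmem : (t, z) ∈ P := by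
      refine Finset.mem_filter.mpr ⟨Finset.mem_univ _, ⟨w, hjt⟩, ?_⟩
      simp only
      rw [hSide]; exact hy
    have hlt2 : wt (t, z) < wt (t₀, w) := by
      simp only [hwt]
      apply Finset.card_lt_card
      rw [Finset.ssubset_iff_of_subset]
      · refine ⟨w, ?_, ?_⟩
        · exact Finset.mem_filter.mpr ⟨Finset.mem_univ _, mem_edgeSide_self t₀ w⟩
        · intro hwmem
          have := (hCsub w (by
            have := Finset.mem_filter.mp hwmem
            rw [hSide] at this
            exact this.2)).2
          exact this rfl
      · intro u hu
        have hu' := Finset.mem_filter.mp hu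
        have := hCsub u (by rw [← hSide]; exact hu'.2)
        exact Finset.mem_filter.mpr ⟨Finset.mem_univ _, this.1⟩
    exact absurd (hmin (t, z) hPmem) (not_le.mpr hlt2)

/-! ### Walks over refinements -/

lemma lift_walk {α β : Type*} {R : α → α → Prop} {R' : β → β → Prop} {m : α → β}
    (hstep : ∀ a b, R a b → Relation.ReflTransGen R' (m a) (m b)) {x y : α}
    (h : Relation.ReflTransGen R x y) : Relation.ReflTransGen R' (m x) (m y) := by
  induction h with
  | refl => exact Relation.ReflTransGen.refl
  | tail _ h ih => exact Relation.ReflTransGen.trans ih (hstep _ _ h)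

lemma refines_walk {G G' : MGraph} {ι : G.V → G'.V} {p : G'.E → Option G.E}
    (href : Refines G G' ι p) :
    ∀ g : G.E, Relation.ReflTransGen (fun a b => ∃ ε, p ε = some g ∧ G'.Joins ε a b)
      (ι (G.fst g)) (ι (G.snd g)) := by
  induction href with
  | refl =>
    intro g
    exact Relation.ReflTransGen.single ⟨g, rfl, joins_ends _ g⟩
  | @subdiv H ιH pH hH e₀ ih =>
    intro g
    refine lift_walk ?_ (ih g)
    rintro x y ⟨ε, hp, hj⟩
    by_cases he : ε = e₀
    · subst he
      rcases hj with ⟨h1, h2⟩ | ⟨h1, h2⟩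
      · refine Relation.ReflTransGen.head (b := Sum.inr ()) ⟨Sum.inr false, hp, ?_⟩
          (Relation.ReflTransGen.single ⟨Sum.inr true, hp, ?_⟩)
        · exact Or.inl ⟨congrArg Sum.inl h1, rfl⟩
        · exact Or.inl ⟨rfl, congrArg Sum.inl h2⟩
      · refine Relation.ReflTransGen.head (b := Sum.inr ()) ⟨Sum.inr true, hp, ?_⟩
          (Relation.ReflTransGen.single ⟨Sum.inr false, hp, ?_⟩)
        · exact Or.inr ⟨rfl, congrArg Sum.inl h2⟩
        · exact Or.inr ⟨congrArg Sum.inl h1, rfl⟩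
    · refine Relation.ReflTransGen.single ⟨Sum.inl ⟨ε, he⟩, hp, ?_⟩
      rcases hj with ⟨h1, h2⟩ | ⟨h1, h2⟩
      · exact Or.inl ⟨congrArg Sum.inl h1, congrArg Sum.inl h2⟩
      · exact Or.inr ⟨congrArg Sum.inl h1, congrArg Sum.inl h2⟩
  | @leaf H ιH pH hH v₀ ih =>
    intro g
    refine lift_walk ?_ (ih g)
    rintro x y ⟨ε, hp, hj⟩
    refine Relation.ReflTransGen.single ⟨Sum.inl ε, hp, ?_⟩
    rcases hj with ⟨h1, h2⟩ | ⟨h1, h2⟩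
    · exact Or.inl ⟨congrArg Sum.inl h1, congrArg Sum.inl h2⟩
    · exact Or.inr ⟨congrArg Sum.inl h1, congrArg Sum.inl h2⟩
  | @iso H ιH pH hH G'' φiso ih =>
    intro g
    refine lift_walk ?_ (ih g)
    rintro x y ⟨ε, hp, hj⟩
    refine Relation.ReflTransGen.single ⟨φiso.eE ε, ?_, hj.transfer (φiso.ends ε)⟩
    simpa using hp

lemma exists_cross_step {α : Type*} {R : α → α → Prop} {S : Set α} {a b : α}
    (h : Relation.ReflTransGen R a b) (hb : b ∉ S) :
    a ∈ S → ∃ x y, R x y ∧ x ∈ S ∧ y ∉ S := by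
  induction h using Relation.ReflTransGen.head_induction_on with
  | refl => exact fun ha => absurd ha hb
  | @head x y h' _ ih =>
    intro ha
    by_cases hy : y ∈ S
    · exact ih hy
    · exact ⟨x, y, h', ha, hy⟩

end MGraph
namespace MGraph

open scoped Matrix

lemma numEdges_symm (G : MGraph) (x y : G.V) : G.numEdges x y = G.numEdges y x := by
  have h : ∀ e : G.E, G.Joins e x y ↔ G.Joins e y x := fun e => ⟨Joins.symm, Joins.symm⟩
  simp only [numEdges, h]

lemma lap_isHermitian (G : MGraph) : G.lapMatrix.IsHermitian := by
  rw [Matrix.IsHermitian]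
  ext i j
  simp only [Matrix.conjTranspose_apply, lapMatrix, star_trivial, numEdges_symm G j i]
  by_cases h : i = j
  · subst h; simp
  · simp [h, Ne.symm h]

private lemma ite_or_add {P Q : Prop} (dpq : Decidable (P ∨ Q)) (dp : Decidable P)
    (dq : Decidable Q) (h : ¬(P ∧ Q)) (t : ℝ) :
    @ite _ (P ∨ Q) dpq t 0 = @ite _ P dp t 0 + @ite _ Q dq t 0 := by
  by_cases hP : P
  · rw [if_pos hP, if_pos (Or.inl hP)]
    by_cases hQ : Q
    · exact absurd ⟨hP, hQ⟩ h
    · rw [if_neg hQ]; ring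
  · rw [if_neg hP]
    by_cases hQ : Q
    · rw [if_pos hQ, if_pos (Or.inr hQ)]; ring
    · rw [if_neg hQ, if_neg (by tauto)]; ring

private lemma double_sum_pair (G : MGraph) (f : G.V → ℝ) (u v : G.V) :
    (∑ x, ∑ y, (if u = x ∧ v = y then f x * f y else 0)) = f u * f v := by
  have inner : ∀ x, (∑ y, (if u = x ∧ v = y then f x * f y else 0))
      = if u = x then f x * f v else 0 := by
    intro x
    by_cases h : u = x
    · simp only [h, true_and]
      rw [Finset.sum_ite_eq Finset.univ v (fun y => f x * f y)]
      simp
    · simp [h]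
  rw [Finset.sum_congr rfl fun x _ => inner x]
  rw [Finset.sum_ite_eq Finset.univ u (fun x => f x * f v)]
  simp

lemma quad_form (G : MGraph) (hGl : G.Loopless) (f : G.V → ℝ) :
    dotProduct f (G.lapMatrix *ᵥ f) = ∑ e, (f (G.fst e) - f (G.snd e))^2 := by
  classical
  have step1 : dotProduct f (G.lapMatrix *ᵥ f)
      = (∑ x, ∑ y, (if x = y then ((G.degree x : ℝ) * (f x * f y)) else 0))
        - ∑ x, ∑ y, (G.numEdges x y : ℝ) * (f x * f y) := by
    rw [← Finset.sum_sub_distrib]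
    simp only [dotProduct, Matrix.mulVec, lapMatrix]
    refine Finset.sum_congr rfl fun x _ => ?_
    rw [← Finset.sum_sub_distrib, Finset.mul_sum]
    refine Finset.sum_congr rfl fun y _ => ?_
    by_cases h : x = y <;> simp [h] <;> ring
  have step2 : (∑ x, ∑ y, (if x = y then ((G.degree x : ℝ) * (f x * f y)) else 0))
      = ∑ x, (G.degree x : ℝ) * (f x)^2 := by
    refine Finset.sum_congr rfl fun x _ => ?_
    rw [Finset.sum_ite_eq Finset.univ x (fun y => (G.degree x : ℝ) * (f x * f y))]
    simp [sq]
  have step3 : ∑ x, (G.degree x : ℝ) * (f x)^2 = ∑ e, ((f (G.fst e))^2 + (f (G.snd e))^2) := by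
    have hdeg : ∀ x : G.V, (G.degree x : ℝ)
        = (∑ e, if G.fst e = x then (1 : ℝ) else 0) + (∑ e, if G.snd e = x then (1 : ℝ) else 0) := by
      intro x
      simp only [degree, Finset.card_filter]
      push_cast
      rfl
    calc ∑ x, (G.degree x : ℝ) * (f x)^2
        = ∑ x, ∑ e, ((if G.fst e = x then (f x)^2 else 0)
            + (if G.snd e = x then (f x)^2 else 0)) := by
          refine Finset.sum_congr rfl fun x _ => ?_
          rw [hdeg x, add_mul, Finset.sum_mul, Finset.sum_mul, ← Finset.sum_add_distrib]
          refine Finset.sum_congr rfl fun e _ => ?_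
          by_cases h1 : G.fst e = x <;> by_cases h2 : G.snd e = x <;> simp [h1, h2]
      _ = ∑ e, ∑ x, ((if G.fst e = x then (f x)^2 else 0)
            + (if G.snd e = x then (f x)^2 else 0)) := Finset.sum_comm
      _ = ∑ e, ((f (G.fst e))^2 + (f (G.snd e))^2) := by
          refine Finset.sum_congr rfl fun e _ => ?_
          rw [Finset.sum_add_distrib,
            Finset.sum_ite_eq Finset.univ (G.fst e) (fun x => (f x)^2),
            Finset.sum_ite_eq Finset.univ (G.snd e) (fun x => (f x)^2)]
          simp
  have step4 : ∑ x, ∑ y, (G.numEdges x y : ℝ) * (f x * f y)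
      = ∑ e, 2 * (f (G.fst e) * f (G.snd e)) := by
    have hnum : ∀ x y : G.V, (G.numEdges x y : ℝ)
        = ∑ e, if G.Joins e x y then (1:ℝ) else 0 := by
      intro x y
      simp only [numEdges, Finset.card_filter]
      push_cast
      rfl
    calc ∑ x, ∑ y, (G.numEdges x y : ℝ) * (f x * f y)
        = ∑ x, ∑ y, ∑ e, (if G.Joins e x y then f x * f y else 0) := by
          refine Finset.sum_congr rfl fun x _ => Finset.sum_congr rfl fun y _ => ?_
          rw [hnum, Finset.sum_mul]
          refine Finset.sum_congr rfl fun e _ => ?_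
          by_cases h : G.Joins e x y <;> simp [h]
      _ = ∑ e, ∑ x, ∑ y, (if G.Joins e x y then f x * f y else 0) := by
          have h1 : ∀ x : G.V, (∑ y, ∑ e, (if G.Joins e x y then f x * f y else 0))
              = ∑ e, ∑ y, (if G.Joins e x y then f x * f y else 0) :=
            fun x => Finset.sum_comm
          rw [Finset.sum_congr rfl fun x _ => h1 x]
          exact Finset.sum_comm
      _ = ∑ e, 2 * (f (G.fst e) * f (G.snd e)) := by
          refine Finset.sum_congr rfl fun e _ => ?_
          have hsplit : ∀ x y : G.V, (if G.Joins e x y then f x * f y else 0)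
              = (if G.fst e = x ∧ G.snd e = y then f x * f y else 0)
                + (if G.fst e = y ∧ G.snd e = x then f x * f y else 0) := by
            intro x y
            refine ite_or_add _ _ _ ?_ _
            rintro ⟨⟨h1, h2⟩, ⟨h3, h4⟩⟩
            exact hGl e (by rw [h1, ← h4])
          rw [Finset.sum_congr rfl fun x _ => Finset.sum_congr rfl fun y _ => hsplit x y]
          have hsw : ∀ x y : G.V, (if G.fst e = y ∧ G.snd e = x then f x * f y else 0)
              = (if G.snd e = x ∧ G.fst e = y then f x * f y else 0) := by
            intro x y
            by_cases h1 : G.fst e = y <;> by_cases h2 : G.snd e = x <;>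
              simp [h1, h2]
          calc ∑ x, ∑ y, ((if G.fst e = x ∧ G.snd e = y then f x * f y else 0)
                + (if G.fst e = y ∧ G.snd e = x then f x * f y else 0))
              = (∑ x, ∑ y, (if G.fst e = x ∧ G.snd e = y then f x * f y else 0))
                + (∑ x, ∑ y, (if G.snd e = x ∧ G.fst e = y then f x * f y else 0)) := by
                rw [← Finset.sum_add_distrib]
                refine Finset.sum_congr rfl fun x _ => ?_
                rw [← Finset.sum_add_distrib]
                exact Finset.sum_congr rfl fun y _ => by rw [hsw x y]
            _ = 2 * (f (G.fst e) * f (G.snd e)) := by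
                rw [double_sum_pair G f (G.fst e) (G.snd e)]
                have := double_sum_pair G (f := f) (G.snd e) (G.fst e)
                rw [this]
                ring
  rw [step1, step2, step3, step4, ← Finset.sum_sub_distrib]
  exact Finset.sum_congr rfl fun e _ => by ring

lemma lap_kernel_const (G : MGraph) (hG : G.Connected) (hGl : G.Loopless) (u : G.V → ℝ)
    (hu : G.lapMatrix *ᵥ u = 0) : ∀ v w : G.V, u v = u w := by
  have hq : ∑ e, (u (G.fst e) - u (G.snd e))^2 = 0 := by
    rw [← quad_form G hGl u, hu]
    simp [dotProduct]
  have hzero : ∀ e : G.E, u (G.fst e) = u (G.snd e) := by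
    intro e
    have h := (Finset.sum_eq_zero_iff_of_nonneg
      (fun e _ => sq_nonneg (u (G.fst e) - u (G.snd e)))).mp hq e (Finset.mem_univ e)
    have h2 := pow_eq_zero_iff (n := 2) (by norm_num) |>.mp h
    linarith [sub_eq_zero.mp h2]
  intro v w
  have hw := hG.2 v w
  induction hw with
  | refl => rfl
  | tail _ hadj ih =>
    obtain ⟨e, hj⟩ := hadj
    rcases hj with ⟨h1, h2⟩ | ⟨h1, h2⟩
    · rw [ih, ← h1, ← h2]; exact hzero e
    · rw [ih, ← h2, ← h1]; exact (hzero e).symm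

lemma rayleigh (G : MGraph) (hG : G.Connected) (hGl : G.Loopless) {lam : ℝ}
    (hlam : G.IsFirstLapEigenvalue lam) (f : G.V → ℝ) (hmean : ∑ v, f v = 0) :
    lam * (∑ v, (f v)^2) ≤ ∑ e, (f (G.fst e) - f (G.snd e))^2 := by
  classical
  have hH : G.lapMatrix.IsHermitian := lap_isHermitian G
  set U : Matrix G.V G.V ℝ := (hH.eigenvectorUnitary : Matrix G.V G.V ℝ) with hU
  set μ : G.V → ℝ := hH.eigenvalues with hμdef
  have hUU : U * star U = 1 := Matrix.mem_unitaryGroup_iff.mp hH.eigenvectorUnitary.2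
  have hUU' : star U * U = 1 := Matrix.mem_unitaryGroup_iff'.mp hH.eigenvectorUnitary.2
  set g : G.V → ℝ := star U *ᵥ f with hg
  have hspec : G.lapMatrix = U * Matrix.diagonal μ * star U := by
    have h := hH.spectral_theorem
    rw [h, Unitary.conjStarAlgAut_apply]
    congr 3
  have hgj : ∀ j, g j = ∑ i, U i j * f i := by
    intro j
    show (star U *ᵥ f) j = _
    simp only [Matrix.mulVec, dotProduct, Matrix.star_apply, star_trivial]
  have hvecMul : Matrix.vecMul f U = g := by
    funext j
    rw [hgj j]
    simp only [Matrix.vecMul, dotProduct]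
    exact Finset.sum_congr rfl fun i _ => mul_comm _ _
  have hquad : dotProduct f (G.lapMatrix *ᵥ f) = ∑ j, μ j * (g j)^2 := by
    rw [hspec, ← Matrix.mulVec_mulVec, ← Matrix.mulVec_mulVec, Matrix.dotProduct_mulVec,
      hvecMul, ← hg]
    simp only [dotProduct, Matrix.mulVec_diagonal]
    exact Finset.sum_congr rfl fun j _ => by ring
  have hnorm : dotProduct f f = ∑ j, (g j)^2 := by
    have h1 : dotProduct g g = dotProduct f f := by
      nth_rewrite 2 [hg]
      rw [Matrix.dotProduct_mulVec]
      have h2 : Matrix.vecMul g (star U) = f := by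
        have h3 : Matrix.vecMul g (star U) = U *ᵥ g := by
          funext i
          simp [Matrix.vecMul, Matrix.mulVec, dotProduct,
            Matrix.conjTranspose_apply, mul_comm]
        rw [h3, hg, Matrix.mulVec_mulVec, hUU, Matrix.one_mulVec]
      rw [h2]
    rw [← h1]
    simp [dotProduct, sq]
  have hkey : ∀ j, lam * (g j)^2 ≤ μ j * (g j)^2 := by
    intro j
    rcases eq_or_ne (g j) 0 with h0 | h0
    · rw [h0]; simp
    have heig := hH.mulVec_eigenvectorBasis j
    set u : G.V → ℝ := ⇑(hH.eigenvectorBasis j) with hu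
    have hcol : ∀ i, U i j = u i := fun i => rfl
    rcases eq_or_ne (μ j) 0 with hμ | hμ
    · exfalso
      have hconst := lap_kernel_const G hG hGl u (by
        rw [hu, heig, ← hμdef, hμ]
        simp)
      obtain ⟨v₀⟩ := hG.1
      have hgj0 : g j = ∑ i, u v₀ * f i := by
        rw [hgj]
        exact Finset.sum_congr rfl fun i _ => by rw [hcol i, hconst i v₀]
      rw [← Finset.mul_sum, hmean, mul_zero] at hgj0
      exact h0 hgj0
    · have hune : u ≠ 0 := by
        intro hzero
        have h1 : (star U * U) j j = 1 := by rw [hUU']; simp [Matrix.one_apply]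
        have h2 : (star U * U) j j = ∑ i, u i * u i := by
          simp [Matrix.mul_apply, Matrix.conjTranspose_apply, hcol]
        rw [h2] at h1
        simp [hzero] at h1
      have hmem : lam ≤ μ j := hlam.2 ⟨hμ, u, hune, heig⟩
      have := sq_nonneg (g j)
      nlinarith
  have hsum : lam * (∑ j, (g j)^2) ≤ ∑ j, μ j * (g j)^2 := by
    rw [Finset.mul_sum]
    exact Finset.sum_le_sum fun j _ => hkey j
  have hff : dotProduct f f = ∑ v, (f v)^2 := by
    simp [dotProduct, sq]
  calc lam * ∑ v, (f v)^2 = lam * ∑ j, (g j)^2 := by rw [← hff, hnorm]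
    _ ≤ ∑ j, μ j * (g j)^2 := hsum
    _ = dotProduct f (G.lapMatrix *ᵥ f) := hquad.symm
    _ = ∑ e, (f (G.fst e) - f (G.snd e))^2 := quad_form G hGl f

end MGraph
/-- Corollary "firstcase" in the paper: if `(T, φ_*μ_G)` is
`c`-thick, then `deg φ ≥ (c/2) · λ_G · |G|`. -/
theorem deg_ge_thick_bound (G G' T : MGraph) (hG : G.Connected)
    (hGl : G.Loopless) (hG'l : G'.Loopless)
    (ι : G.V → G'.V) (p : G'.E → Option G.E) (href : Refines G G' ι p)
    (hT : T.IsTree) (φ : FinHarm G' T)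
    (lam : ℝ) (hlam : G.IsFirstLapEigenvalue lam)
    (c : ℝ) (hc : 0 < c) (hthick : PushThick ι φ c)
    (d : ℕ) (hd : φ.IsDegree d) :
    (c / 2) * lam * (Fintype.card G.V : ℝ) ≤ (d : ℝ) := by
  classical
  have hnpos : 0 < Fintype.card G.V := Fintype.card_pos_iff.mpr hG.1
  set n : ℕ := Fintype.card G.V with hn
  obtain ⟨e₀, hS1, hS2⟩ := exists_good_edge T hT (fun S => pushMeasure ι φ S) c hthick
  set S₁ : Set T.V := T.edgeSide e₀ (T.fst e₀) with hS₁def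
  set S₂ : Set T.V := T.edgeSide e₀ (T.snd e₀) with hS₂def
  have hdisj : ∀ w, w ∈ S₁ → w ∈ S₂ → False :=
    fun w h1 h2 => edgeSide_disjoint hT (joins_ends T e₀) h1 h2
  set A : Finset G.V := Finset.univ.filter (fun v => φ.fV (ι v) ∈ S₁) with hA
  set B : Finset G.V := Finset.univ.filter (fun v => ¬ (φ.fV (ι v) ∈ S₁)) with hB
  have hABcard : A.card + B.card = n := by
    rw [hA, hB, Finset.card_filter_add_card_filter_not, Finset.card_univ]
  have hnR : (0:ℝ) < (n:ℝ) := by exact_mod_cast hnpos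
  have hcount1 : c * (n:ℝ) ≤ (A.card : ℝ) := by
    have h1 : c ≤ (A.card : ℝ) / (n:ℝ) := by
      have h0 : pushMeasure ι φ S₁ = (A.card : ℝ) / (n:ℝ) := rfl
      rw [← h0]; exact hS1
    calc c * (n:ℝ) ≤ ((A.card : ℝ)/(n:ℝ)) * (n:ℝ) :=
          mul_le_mul_of_nonneg_right h1 (le_of_lt hnR)
      _ = (A.card : ℝ) := div_mul_cancel₀ _ (ne_of_gt hnR)
  have hcount2 : c * (n:ℝ) ≤ (B.card : ℝ) := by
    set A₂ : Finset G.V := Finset.univ.filter (fun v => φ.fV (ι v) ∈ S₂) with hA₂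
    have hsub : A₂ ⊆ B := by
      intro v hv
      rw [hA₂, Finset.mem_filter] at hv
      rw [hB, Finset.mem_filter]
      exact ⟨Finset.mem_univ _, fun hin => hdisj _ hin hv.2⟩
    have h2 : c ≤ (A₂.card : ℝ) / (n:ℝ) := by
      have h0 : pushMeasure ι φ S₂ = (A₂.card : ℝ) / (n:ℝ) := rfl
      rw [← h0]; exact hS2
    have h3 : c * (n:ℝ) ≤ (A₂.card : ℝ) := by
      calc c * (n:ℝ) ≤ ((A₂.card : ℝ)/(n:ℝ)) * (n:ℝ) :=
            mul_le_mul_of_nonneg_right h2 (le_of_lt hnR)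
        _ = (A₂.card : ℝ) := div_mul_cancel₀ _ (ne_of_gt hnR)
    refine le_trans h3 ?_
    exact_mod_cast Finset.card_le_card hsub
  set f : G.V → ℝ := fun v => if φ.fV (ι v) ∈ S₁ then (B.card : ℝ) else -(A.card : ℝ) with hf
  have hsumf : ∑ v, f v = 0 := by
    rw [hf, Finset.sum_ite, Finset.sum_const, Finset.sum_const, ← hA, ← hB]
    simp only [nsmul_eq_mul]
    ring
  have hsumsq : ∑ v, (f v)^2 = (A.card : ℝ) * (B.card:ℝ)^2 + (B.card:ℝ) * (A.card:ℝ)^2 := by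
    have hterm : ∀ v, (f v)^2
        = if φ.fV (ι v) ∈ S₁ then ((B.card:ℝ))^2 else ((A.card:ℝ))^2 := by
      intro v; rw [hf]; by_cases h : φ.fV (ι v) ∈ S₁ <;> simp [h]
    rw [Finset.sum_congr rfl fun v _ => hterm v, Finset.sum_ite, Finset.sum_const,
      Finset.sum_const, ← hA, ← hB]
    simp only [nsmul_eq_mul]
  have habn : (A.card : ℝ) + (B.card : ℝ) = (n : ℝ) := by exact_mod_cast hABcard
  set cross : Finset G.E := Finset.univ.filter
    (fun g => ¬ ((φ.fV (ι (G.fst g)) ∈ S₁) ↔ (φ.fV (ι (G.snd g)) ∈ S₁))) with hcross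
  have hterm2 : ∀ g : G.E, (f (G.fst g) - f (G.snd g))^2
      = if ¬ ((φ.fV (ι (G.fst g)) ∈ S₁) ↔ (φ.fV (ι (G.snd g)) ∈ S₁)) then (n:ℝ)^2 else 0 := by
    intro g
    simp only [hf]
    by_cases h1 : φ.fV (ι (G.fst g)) ∈ S₁ <;> by_cases h2 : φ.fV (ι (G.snd g)) ∈ S₁
    · simp [h1, h2]
    · rw [if_pos h1, if_neg h2, if_pos (by simp [h1, h2])]
      calc ((B.card:ℝ) - (-(A.card:ℝ)))^2 = ((A.card:ℝ) + (B.card:ℝ))^2 := by ring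
        _ = (n:ℝ)^2 := by rw [habn]
    · rw [if_neg h1, if_pos h2, if_pos (by simp [h1, h2])]
      calc (-(A.card:ℝ) - (B.card:ℝ))^2 = ((A.card:ℝ) + (B.card:ℝ))^2 := by ring
        _ = (n:ℝ)^2 := by rw [habn]
    · simp [h1, h2]
  have hquadval : ∑ e, (f (G.fst e) - f (G.snd e))^2 = (cross.card : ℝ) * (n:ℝ)^2 := by
    rw [Finset.sum_congr rfl fun e _ => hterm2 e, Finset.sum_ite, Finset.sum_const,
      Finset.sum_const, ← hcross]
    simp [nsmul_eq_mul]
  have hstep : ∀ g ∈ cross, ∃ ε : G'.E, p ε = some g ∧ φ.fE ε = e₀ := by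
    intro g hg
    rw [hcross, Finset.mem_filter] at hg
    have hwalk := refines_walk href g
    have hcr : ∀ x y : G'.V, (∃ ε, p ε = some g ∧ G'.Joins ε x y) →
        φ.fV x ∈ S₁ → φ.fV y ∉ S₁ → ∃ ε, p ε = some g ∧ φ.fE ε = e₀ := by
      rintro x y ⟨ε, hp, hj⟩ hx hy
      refine ⟨ε, hp, ?_⟩
      by_contra hne
      have himg : T.Joins (φ.fE ε) (φ.fV x) (φ.fV y) := hj.transfer (φ.ends ε)
      exact hy (edgeSide_step hx hne himg)
    by_cases h1 : φ.fV (ι (G.fst g)) ∈ S₁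
    · have h2 : φ.fV (ι (G.snd g)) ∉ S₁ := fun h => hg.2 ⟨fun _ => h, fun _ => h1⟩
      obtain ⟨x, y, hR, hx, hy⟩ :=
        exists_cross_step (S := {w : G'.V | φ.fV w ∈ S₁}) hwalk h2 h1
      exact hcr x y hR hx hy
    · have h2 : φ.fV (ι (G.snd g)) ∈ S₁ := by
        by_contra h2
        exact hg.2 ⟨fun h => absurd h h1, fun h => absurd h h2⟩
      obtain ⟨x, y, hR, hx, hy⟩ :=
        exists_cross_step (S := {w : G'.V | φ.fV w ∉ S₁}) hwalk (fun hcon => hcon h2) h1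
      obtain ⟨ε, hp, hj⟩ := hR
      exact hcr y x ⟨ε, hp, hj.symm⟩ (not_not.mp hy) hx
  have hfiber : (Finset.univ.filter (fun ε : G'.E => φ.fE ε = e₀)).card ≤ d := by
    have hd2 := hd.2 e₀
    calc (Finset.univ.filter (fun ε : G'.E => φ.fE ε = e₀)).card
        = ∑ ε ∈ Finset.univ.filter (fun ε : G'.E => φ.fE ε = e₀), 1 :=
          Finset.card_eq_sum_ones _
      _ ≤ ∑ ε ∈ Finset.univ.filter (fun ε : G'.E => φ.fE ε = e₀), φ.r ε :=
          Finset.sum_le_sum fun ε _ => φ.r_pos ε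
      _ = d := hd2
  have hcrosscard : cross.card ≤ d := by
    rcases Finset.eq_empty_or_nonempty cross with hemp | hne
    · rw [hemp]; simp
    · obtain ⟨g₀, hg₀⟩ := hne
      obtain ⟨ε₀, -, -⟩ := hstep g₀ hg₀
      refine le_trans (Finset.card_le_card_of_injOn
        (fun g => if h : ∃ ε : G'.E, p ε = some g ∧ φ.fE ε = e₀ then h.choose else ε₀)
        ?_ ?_) hfiber
      · intro g hg
        have h := hstep g hg
        beta_reduce
        rw [dif_pos h]
        exact Finset.mem_filter.mpr ⟨Finset.mem_univ _, h.choose_spec.2⟩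
      · intro g1 h1 g2 h2 heq
        have hh1 := hstep g1 (Finset.mem_coe.mp h1)
        have hh2 := hstep g2 (Finset.mem_coe.mp h2)
        beta_reduce at heq
        rw [dif_pos hh1, dif_pos hh2] at heq
        have e1 := hh1.choose_spec.1
        have e2 := hh2.choose_spec.1
        rw [heq, e2] at e1
        exact Option.some_injective _ e1.symm
  have hray := rayleigh G hG hGl hlam f hsumf
  have hmain : lam * ((A.card:ℝ) * (B.card:ℝ)^2 + (B.card:ℝ) * (A.card:ℝ)^2)
      ≤ (d:ℝ) * (n:ℝ)^2 := by
    rw [← hsumsq]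
    refine le_trans hray ?_
    rw [hquadval]
    have hXd : (cross.card : ℝ) ≤ (d:ℝ) := by exact_mod_cast hcrosscard
    exact mul_le_mul_of_nonneg_right hXd (sq_nonneg _)
  rcases le_or_gt lam 0 with hneg | hpos
  · have h2 : (c / 2) * lam * (n : ℝ) ≤ 0 :=
      mul_nonpos_of_nonpos_of_nonneg
        (mul_nonpos_of_nonneg_of_nonpos (by positivity) hneg) (Nat.cast_nonneg _)
    exact le_trans h2 (Nat.cast_nonneg d)
  · have hAB : (c * (n:ℝ)) * ((n:ℝ)/2) ≤ (A.card:ℝ) * (B.card:ℝ) := by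
      rcases le_total (A.card : ℝ) (B.card:ℝ) with hle | hle
      · have hbge : (n:ℝ)/2 ≤ (B.card:ℝ) := by linarith [habn]
        exact mul_le_mul hcount1 hbge (by positivity) (le_trans (by positivity) hcount1)
      · have hage : (n:ℝ)/2 ≤ (A.card:ℝ) := by linarith [habn]
        calc (c * (n:ℝ)) * ((n:ℝ)/2) ≤ (B.card:ℝ) * (A.card:ℝ) :=
              mul_le_mul hcount2 hage (by positivity) (le_trans (by positivity) hcount2)
          _ = (A.card:ℝ) * (B.card:ℝ) := mul_comm _ _
    have hfact : (A.card:ℝ) * (B.card:ℝ)^2 + (B.card:ℝ) * (A.card:ℝ)^2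
        = ((A.card:ℝ) * (B.card:ℝ)) * (n:ℝ) := by rw [← habn]; ring
    have h1 : lam * (((c * (n:ℝ)) * ((n:ℝ)/2)) * (n:ℝ))
        ≤ lam * (((A.card:ℝ) * (B.card:ℝ)) * (n:ℝ)) := by
      apply mul_le_mul_of_nonneg_left _ (le_of_lt hpos)
      exact mul_le_mul_of_nonneg_right hAB (le_of_lt hnR)
    have h2 : lam * (((A.card:ℝ) * (B.card:ℝ)) * (n:ℝ)) ≤ (d:ℝ) * (n:ℝ)^2 := by
      rw [← hfact]; exact hmain
    have h3 : ((c/2) * lam * (n:ℝ)) * (n:ℝ)^2 ≤ (d:ℝ) * (n:ℝ)^2 := by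
      calc ((c/2) * lam * (n:ℝ)) * (n:ℝ)^2
          = lam * (((c * (n:ℝ)) * ((n:ℝ)/2)) * (n:ℝ)) := by ring
        _ ≤ (d:ℝ) * (n:ℝ)^2 := le_trans h1 h2
    exact le_of_mul_le_mul_right h3 (by positivity : (0:ℝ) < (n:ℝ)^2)
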